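/- A normalized sense-preserving harmonic mapping f = h + conj(g) in D (h(0)=0, h'(0)=1, g(0)=0) satisfies ||P_f|| ≤ λ if and only if for each pair of points z, z₀ in D, |log J_f(z) - log J_f(z₀)| ≤ λ·d_h(z,z₀), where J_f = |h'|²-|g'|² > 0 is the Jacobian and d_h(z,z₀) = 2·arctanh|(z-z₀)/(1-conj(z₀)z)| is the hyperbolic distance. -/

import Mathlib

open Complex Metric

/-- Pre-Schwarzian derivative of an analytic function. -/
noncomputable def pd (F : ℂ → ℂ) (z : ℂ) : ℂ := deriv (deriv F) z / deriv F z

/-- Dilatation of the harmonic mapping `h + conj g`. -/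
noncomputable def dil (h g : ℂ → ℂ) (z : ℂ) : ℂ := deriv g z / deriv h z

/-- Pre-Schwarzian derivative of the harmonic mapping `h + conj g`. -/
noncomputable def PH (h g : ℂ → ℂ) (z : ℂ) : ℂ :=
  pd h z - (starRingEnd ℂ) (dil h g z) * deriv (dil h g) z / ((1 - ‖dil h g z‖ ^ 2 : ℝ) : ℂ)

/-- Pre-Schwarzian norm. -/
noncomputable def pnorm (P : ℂ → ℂ) : ℝ :=
  ⨆ z : Metric.ball (0 : ℂ) 1, (1 - ‖(z : ℂ)‖ ^ 2) * ‖P (z : ℂ)‖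

/-- The range whose boundedness expresses finiteness of the pre-Schwarzian norm. -/
def pbdd (P : ℂ → ℂ) : Prop :=
  BddAbove (Set.range fun z : Metric.ball (0 : ℂ) 1 => (1 - ‖(z : ℂ)‖ ^ 2) * ‖P (z : ℂ)‖)

/-- `h + conj g` is a sense-preserving harmonic mapping in the unit disk. -/
def SPH (h g : ℂ → ℂ) : Prop :=
  DifferentiableOn ℂ h (Metric.ball (0 : ℂ) 1) ∧
  DifferentiableOn ℂ g (Metric.ball (0 : ℂ) 1) ∧ g 0 = 0 ∧
  ∀ z ∈ Metric.ball (0 : ℂ) 1, ‖deriv g z‖ < ‖deriv h z‖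


/-!
Along a curve `c`, `d/dt log J_f(c t) = 2 Re (P_f(c t) c'(t))`, because
`P_f J_f = conj(h') h'' - conj(g') g''`.

For `|log J_f(z) - log J_f(a)| ≤ λ d_h(z, a)`, follow the geodesic `t ↦ φ_a(t w)`, `t ∈ [0, 1]`,
where `φ_a` is the disk automorphism with `φ_a(0) = a` and `w = φ_a⁻¹(z)`. Since `φ_a` is a
hyperbolic isometry, `(1 - |γ|²)⁻¹ |γ'| = |w| / (1 - t²|w|²)`, so the bound `(1 - |γ|²)|P_f(γ)| ≤ λ`
makes `2λ|w| / (1 - t²|w|²)` dominate the derivative of `log J_f(γ t)`, and it integrates to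
`λ log((1 + |w|) / (1 - |w|)) = λ d_h(z, a)`.

Conversely, move from `a` along the ray `a + t v` with `P_f(a) v = |P_f(a)|`. Then
`log J_f` has right derivative `2|P_f(a)|` at `t = 0`, while the hypothesis together with
`log((1 + ρ) / (1 - ρ)) ≤ 2ρ / (1 - ρ)` bounds its difference quotients by a quantity tending to
`2λ / (1 - |a|²)`.
-/

open scoped ComplexConjugate
open Filter Topology Set

noncomputable def logJac (h g : ℂ → ℂ) (z : ℂ) : ℝ :=
  Real.log (‖deriv h z‖ ^ 2 - ‖deriv g z‖ ^ 2)

noncomputable def pseudoHypDist (z z₀ : ℂ) : ℝ := ‖(z - z₀) / (1 - conj z₀ * z)‖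

/-- The hyperbolic distance `d_h(z, z₀) = 2 artanh (pseudoHypDist z z₀)`. -/
noncomputable def hypDist (z z₀ : ℂ) : ℝ :=
  Real.log ((1 + pseudoHypDist z z₀) / (1 - pseudoHypDist z z₀))

noncomputable def mobius (a ζ : ℂ) : ℂ := (ζ + a) / (1 + conj a * ζ)

theorem Real.log_one_add_div_one_sub_le {x : ℝ} (h0 : 0 ≤ x) (h1 : x < 1) :
    Real.log ((1 + x) / (1 - x)) ≤ 2 * x / (1 - x) := by
  have hpos : 0 < 1 - x := by linarith
  calc Real.log ((1 + x) / (1 - x)) ≤ (1 + x) / (1 - x) - 1 :=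
        Real.log_le_sub_one_of_pos (by positivity)
    _ = 2 * x / (1 - x) := by field_simp; ring

theorem hasDerivAt_log_one_add_mul_sub_log_one_sub_mul {r t : ℝ} (h : |t * r| < 1) :
    HasDerivAt (fun s => Real.log (1 + s * r) - Real.log (1 - s * r))
      (2 * r / (1 - (t * r) ^ 2)) t := by
  obtain ⟨hlo, hhi⟩ := abs_lt.mp h
  have hp : 1 + t * r ≠ 0 := by linarith
  have hm : 1 - t * r ≠ 0 := by linarith
  have hplus := (((hasDerivAt_id t).mul_const r).const_add 1).log hp
  have hminus := (((hasDerivAt_id t).mul_const r).const_sub 1).log hm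
  refine (hplus.sub hminus).congr_deriv ?_
  simp only [id, one_mul, neg_div, sub_neg_eq_add]
  rw [div_add_div _ _ hp hm, div_eq_div_iff (mul_ne_zero hp hm) (by nlinarith)]
  ring

theorem abs_sub_le_sub_of_abs_deriv_le {f f' φ φ' : ℝ → ℝ} {a b : ℝ} (hab : a ≤ b)
    (hf : ∀ t ∈ Icc a b, HasDerivAt f (f' t) t) (hφ : ∀ t ∈ Icc a b, HasDerivAt φ (φ' t) t)
    (bound : ∀ t ∈ Icc a b, |f' t| ≤ φ' t) : |f b - f a| ≤ φ b - φ a :=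
  image_norm_le_of_norm_deriv_right_le_deriv_boundary' (f := fun t => f t - f a)
    (B := fun t => φ t - φ a) (fun t ht => ((hf t ht).sub_const _).continuousAt.continuousWithinAt)
    (fun t ht => ((hf t (Ico_subset_Icc_self ht)).sub_const _).hasDerivWithinAt) (by simp)
    (fun t ht => ((hφ t ht).sub_const _).continuousAt.continuousWithinAt)
    (fun t ht => ((hφ t (Ico_subset_Icc_self ht)).sub_const _).hasDerivWithinAt)
    (fun t ht => bound t (Ico_subset_Icc_self ht)) (right_mem_Icc.mpr hab)

theorem le_of_hasDerivAt_of_sub_le_mul {F R : ℝ → ℝ} {F' x : ℝ} (hF : HasDerivAt F F' x)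
    (hR : ContinuousAt R x) (hle : ∀ᶠ t in 𝓝[>] x, F t - F x ≤ (t - x) * R t) : F' ≤ R x := by
  refine le_of_tendsto_of_tendsto ((hasDerivAt_iff_tendsto_slope.mp hF).mono_left
    (nhdsGT_le_nhdsNE x)) (hR.tendsto.mono_left nhdsWithin_le_nhds) ?_
  filter_upwards [hle, self_mem_nhdsWithin] with t ht hxt
  rw [slope_def_field, div_le_iff₀ (sub_pos.mpr hxt), mul_comm]
  exact ht

theorem Complex.exists_norm_eq_one_mul_eq_norm (P : ℂ) : ∃ v : ℂ, ‖v‖ = 1 ∧ P * v = ‖P‖ := by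
  rcases eq_or_ne P 0 with rfl | hP
  · exact ⟨1, by simp, by simp⟩
  · have hn : (‖P‖ : ℂ) ≠ 0 := by exact_mod_cast norm_ne_zero_iff.mpr hP
    refine ⟨conj P / ‖P‖, ?_, ?_⟩
    · rw [norm_div, Complex.norm_conj, Complex.norm_real, Real.norm_of_nonneg (norm_nonneg P),
        div_self (norm_ne_zero_iff.mpr hP)]
    · rw [mul_div_assoc', Complex.mul_conj', sq, mul_div_assoc, div_self hn, mul_one]

section Mobius

variable {a ζ z : ℂ}

theorem norm_one_add_conj_mul_sq_sub_norm_add_sq (a ζ : ℂ) :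
    ‖1 + conj a * ζ‖ ^ 2 - ‖ζ + a‖ ^ 2 = (1 - ‖a‖ ^ 2) * (1 - ‖ζ‖ ^ 2) := by
  simp only [← Complex.normSq_eq_norm_sq, Complex.normSq_apply, Complex.add_re, Complex.add_im,
    Complex.mul_re, Complex.mul_im, Complex.conj_re, Complex.conj_im, Complex.one_re,
    Complex.one_im]
  ring

theorem norm_add_lt_norm_one_add_conj_mul (ha : ‖a‖ < 1) (hζ : ‖ζ‖ < 1) :
    ‖ζ + a‖ < ‖1 + conj a * ζ‖ := by
  have key := norm_one_add_conj_mul_sq_sub_norm_add_sq a ζ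
  have hpos : 0 < (1 - ‖a‖ ^ 2) * (1 - ‖ζ‖ ^ 2) := by
    apply mul_pos <;> nlinarith [norm_nonneg a, norm_nonneg ζ]
  exact lt_of_pow_lt_pow_left₀ 2 (norm_nonneg _) (by linarith)

theorem one_add_conj_mul_ne_zero (ha : ‖a‖ < 1) (hζ : ‖ζ‖ < 1) : 1 + conj a * ζ ≠ 0 :=
  norm_pos_iff.mp ((norm_nonneg _).trans_lt (norm_add_lt_norm_one_add_conj_mul ha hζ))

theorem one_sub_conj_mul_ne_zero (ha : ‖a‖ < 1) (hz : ‖z‖ < 1) : 1 - conj a * z ≠ 0 := by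
  simpa [sub_eq_add_neg] using one_add_conj_mul_ne_zero (a := -a) (by rwa [norm_neg]) hz

theorem norm_mobius_lt_one (ha : ‖a‖ < 1) (hζ : ‖ζ‖ < 1) : ‖mobius a ζ‖ < 1 := by
  rw [mobius, norm_div, div_lt_one (norm_pos_iff.mpr (one_add_conj_mul_ne_zero ha hζ))]
  exact norm_add_lt_norm_one_add_conj_mul ha hζ

@[simp]
theorem mobius_zero (a : ℂ) : mobius a 0 = a := by simp [mobius]

theorem mobius_neg (a z : ℂ) : mobius (-a) z = (z - a) / (1 - conj a * z) := by
  simp [mobius, sub_eq_add_neg]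

theorem mobius_mobius_neg (ha : ‖a‖ < 1) (hz : ‖z‖ < 1) : mobius a (mobius (-a) z) = z := by
  have hd' : 1 - z * conj a ≠ 0 := by rw [mul_comm]; exact one_sub_conj_mul_ne_zero ha hz
  have ha' : 1 - conj a * a ≠ 0 := one_sub_conj_mul_ne_zero ha ha
  rw [mobius_neg, mobius]
  field_simp
  rw [show 1 - z * conj a + (z - a) * conj a = 1 - conj a * a by ring, div_eq_iff ha']
  ring

theorem hasDerivAt_mobius (hζ : 1 + conj a * ζ ≠ 0) :
    HasDerivAt (mobius a) ((1 - ‖a‖ ^ 2 : ℝ) / (1 + conj a * ζ) ^ 2) ζ := by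
  refine (((hasDerivAt_id ζ).add_const a).div
    (((hasDerivAt_id ζ).const_mul (conj a)).const_add 1) hζ).congr_deriv ?_
  simp only [id, Complex.ofReal_sub, Complex.ofReal_one, Complex.ofReal_pow, ← Complex.conj_mul']
  ring

theorem hasDerivAt_mobius_ofReal_mul {w : ℂ} {t : ℝ} (hζ : 1 + conj a * (t * w) ≠ 0) :
    HasDerivAt (fun s : ℝ => mobius a (s * w)) (deriv (mobius a) (t * w) * w) t := by
  refine ((hasDerivAt_mobius hζ).differentiableAt.hasDerivAt.comp t
    ((hasDerivAt_id t).ofReal_comp.mul_const w)).congr_deriv ?_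
  simp

theorem one_sub_norm_mobius_sq (ha : ‖a‖ < 1) (hζ : ‖ζ‖ < 1) :
    1 - ‖mobius a ζ‖ ^ 2 = (1 - ‖a‖ ^ 2) * (1 - ‖ζ‖ ^ 2) / ‖1 + conj a * ζ‖ ^ 2 := by
  have hd : ‖1 + conj a * ζ‖ ^ 2 ≠ 0 := by simp [one_add_conj_mul_ne_zero ha hζ]
  rw [mobius, norm_div, div_pow, ← norm_one_add_conj_mul_sq_sub_norm_add_sq, sub_div,
    div_self hd]

theorem norm_deriv_mobius_mul (ha : ‖a‖ < 1) (hζ : ‖ζ‖ < 1) :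
    ‖deriv (mobius a) ζ‖ * (1 - ‖ζ‖ ^ 2) = 1 - ‖mobius a ζ‖ ^ 2 := by
  rw [(hasDerivAt_mobius (one_add_conj_mul_ne_zero ha hζ)).deriv, one_sub_norm_mobius_sq ha hζ,
    norm_div, norm_pow, Complex.norm_real, Real.norm_of_nonneg (by nlinarith [norm_nonneg a])]
  ring

theorem pseudoHypDist_eq_norm_mobius (z z₀ : ℂ) : pseudoHypDist z z₀ = ‖mobius (-z₀) z‖ := by
  rw [pseudoHypDist, mobius_neg]

theorem pseudoHypDist_lt_one (hz : ‖z‖ < 1) (ha : ‖a‖ < 1) : pseudoHypDist z a < 1 := by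
  rw [pseudoHypDist_eq_norm_mobius]
  exact norm_mobius_lt_one (by rwa [norm_neg]) hz

theorem pseudoHypDist_add_mul {v : ℂ} (hv : ‖v‖ = 1) {t : ℝ} (ht : 0 ≤ t) :
    pseudoHypDist (a + t * v) a = t / ‖1 - conj a * (a + t * v)‖ := by
  rw [pseudoHypDist, add_sub_cancel_left, norm_div, norm_mul, hv, mul_one, Complex.norm_real,
    Real.norm_of_nonneg ht]

theorem hypDist_add_mul_le {v : ℂ} (hv : ‖v‖ = 1) {t : ℝ} (ht : 0 ≤ t) (ha : ‖a‖ < 1)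
    (hat : ‖a + t * v‖ < 1) :
    hypDist (a + t * v) a ≤ 2 * t / (‖1 - conj a * (a + t * v)‖ - t) := by
  have hρ := pseudoHypDist_add_mul hv ht (a := a)
  have hρ1 := pseudoHypDist_lt_one hat ha
  have hD : 0 < ‖1 - conj a * (a + t * v)‖ := norm_pos_iff.mpr (one_sub_conj_mul_ne_zero ha hat)
  calc hypDist (a + t * v) a
      ≤ 2 * pseudoHypDist (a + t * v) a / (1 - pseudoHypDist (a + t * v) a) :=
        Real.log_one_add_div_one_sub_le (by rw [pseudoHypDist]; positivity) hρ1
    _ = 2 * t / (‖1 - conj a * (a + t * v)‖ - t) := by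
        rw [hρ, one_sub_div hD.ne', div_div_eq_mul_div]
        field_simp

end Mobius

section Harmonic

variable {h g : ℂ → ℂ}

theorem jacobian_pos {z : ℂ} (hlt : ‖deriv g z‖ < ‖deriv h z‖) :
    0 < ‖deriv h z‖ ^ 2 - ‖deriv g z‖ ^ 2 :=
  sub_pos.mpr (pow_lt_pow_left₀ hlt (norm_nonneg _) two_ne_zero)

theorem PH_mul_jacobian {z : ℂ} (hh : DifferentiableAt ℂ (deriv h) z)
    (hg : DifferentiableAt ℂ (deriv g) z) (hlt : ‖deriv g z‖ < ‖deriv h z‖) :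
    PH h g z * ((‖deriv h z‖ ^ 2 - ‖deriv g z‖ ^ 2 : ℝ) : ℂ) =
      conj (deriv h z) * deriv (deriv h) z - conj (deriv g z) * deriv (deriv g) z := by
  have hA : deriv h z ≠ 0 := norm_pos_iff.mp ((norm_nonneg _).trans_lt hlt)
  have hdil : deriv (dil h g) z =
      (deriv (deriv g) z * deriv h z - deriv g z * deriv (deriv h) z) / deriv h z ^ 2 :=
    deriv_div hg hh hA
  have hJ := jacobian_pos hlt
  rw [PH, pd, hdil, dil, norm_div, div_pow, one_sub_div (by simpa using hA)]
  set A := deriv h z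
  set B := deriv g z
  have hcA : conj A ≠ 0 := by simpa using hA
  have hJ' : A * conj A - conj B * B ≠ 0 := by
    simp only [Complex.mul_conj', Complex.conj_mul']; exact_mod_cast hJ.ne'
  push_cast
  simp only [← Complex.mul_conj', map_div₀]
  field_simp
  ring

theorem hasDerivAt_logJac_comp {c : ℝ → ℂ} {c' : ℂ} {t : ℝ}
    (hh : DifferentiableAt ℂ (deriv h) (c t)) (hg : DifferentiableAt ℂ (deriv g) (c t))
    (hlt : ‖deriv g (c t)‖ < ‖deriv h (c t)‖) (hc : HasDerivAt c c' t) :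
    HasDerivAt (fun s => logJac h g (c s)) (2 * (PH h g (c t) * c').re) t := by
  have hJ := jacobian_pos hlt
  refine (((hh.hasDerivAt.comp t hc).norm_sq.sub
    (hg.hasDerivAt.comp t hc).norm_sq).log hJ.ne').congr_deriv ?_
  have key : (PH h g (c t) * c').re * (‖deriv h (c t)‖ ^ 2 - ‖deriv g (c t)‖ ^ 2) =
      ((conj (deriv h (c t)) * deriv (deriv h) (c t) -
        conj (deriv g (c t)) * deriv (deriv g) (c t)) * c').re := by
    rw [← PH_mul_jacobian hh hg hlt, mul_right_comm, Complex.re_mul_ofReal]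
  simp only [Pi.sub_apply, Function.comp_apply, Complex.inner]
  rw [div_eq_iff hJ.ne', mul_assoc 2 (PH h g (c t) * c').re, key]
  simp only [Complex.mul_re, Complex.sub_re, Complex.sub_im, Complex.mul_im, Complex.conj_re,
    Complex.conj_im]
  ring

theorem hasDerivAt_logJac_comp_of_mem_ball (hh : DifferentiableOn ℂ h (ball 0 1))
    (hg : DifferentiableOn ℂ g (ball 0 1)) (hlt : ∀ z ∈ ball (0 : ℂ) 1, ‖deriv g z‖ < ‖deriv h z‖)
    {c : ℝ → ℂ} {c' : ℂ} {t : ℝ} (hct : c t ∈ ball (0 : ℂ) 1) (hc : HasDerivAt c c' t) :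
    HasDerivAt (fun s => logJac h g (c s)) (2 * (PH h g (c t) * c').re) t :=
  hasDerivAt_logJac_comp ((hh.deriv isOpen_ball).differentiableAt (isOpen_ball.mem_nhds hct))
    ((hg.deriv isOpen_ball).differentiableAt (isOpen_ball.mem_nhds hct)) (hlt _ hct) hc

theorem abs_two_mul_re_PH_mul_deriv_mobius_le {lam : ℝ}
    (hb : ∀ z ∈ ball (0 : ℂ) 1, (1 - ‖z‖ ^ 2) * ‖PH h g z‖ ≤ lam)
    {a w : ℂ} {t : ℝ} (ha : ‖a‖ < 1) (ht : 0 ≤ t) (htw : t * ‖w‖ < 1) :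
    |2 * (PH h g (mobius a (t * w)) * (deriv (mobius a) (t * w) * w)).re|
      ≤ lam * (2 * ‖w‖ / (1 - (t * ‖w‖) ^ 2)) := by
  have hnorm : ‖(t : ℂ) * w‖ = t * ‖w‖ := by
    rw [norm_mul, Complex.norm_real, Real.norm_of_nonneg ht]
  have hspeed := norm_deriv_mobius_mul ha (hnorm.trans_lt htw)
  rw [hnorm] at hspeed
  have hpos : 0 < 1 - (t * ‖w‖) ^ 2 := by nlinarith [mul_nonneg ht (norm_nonneg w)]
  calc |2 * (PH h g (mobius a (t * w)) * (deriv (mobius a) (t * w) * w)).re|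
      ≤ 2 * ‖PH h g (mobius a (t * w)) * (deriv (mobius a) (t * w) * w)‖ := by
        rw [abs_mul, abs_two]
        gcongr
        exact Complex.abs_re_le_norm _
    _ = 2 * ‖w‖ * ((1 - ‖mobius a (t * w)‖ ^ 2) * ‖PH h g (mobius a (t * w))‖) /
          (1 - (t * ‖w‖) ^ 2) := by
        rw [← hspeed, eq_div_iff hpos.ne', norm_mul, norm_mul]
        ring
    _ ≤ 2 * ‖w‖ * lam / (1 - (t * ‖w‖) ^ 2) := by
        gcongr
        exact hb _ (mem_ball_zero_iff.mpr (norm_mobius_lt_one ha (hnorm.trans_lt htw)))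
    _ = lam * (2 * ‖w‖ / (1 - (t * ‖w‖) ^ 2)) := by ring

theorem abs_logJac_sub_le_mul_hypDist {lam : ℝ} (hh : DifferentiableOn ℂ h (ball 0 1))
    (hg : DifferentiableOn ℂ g (ball 0 1)) (hlt : ∀ z ∈ ball (0 : ℂ) 1, ‖deriv g z‖ < ‖deriv h z‖)
    (hb : ∀ z ∈ ball (0 : ℂ) 1, (1 - ‖z‖ ^ 2) * ‖PH h g z‖ ≤ lam)
    {z a : ℂ} (hz : ‖z‖ < 1) (ha : ‖a‖ < 1) :
    |logJac h g z - logJac h g a| ≤ lam * hypDist z a := by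
  set w := mobius (-a) z
  have hw : mobius a w = z := mobius_mobius_neg ha hz
  have hr : ‖w‖ < 1 := norm_mobius_lt_one (by rwa [norm_neg]) hz
  have htw : ∀ t ∈ Icc (0 : ℝ) 1, t * ‖w‖ < 1 := fun t ht =>
    (mul_le_of_le_one_left (norm_nonneg w) ht.2).trans_lt hr
  have hmem : ∀ t ∈ Icc (0 : ℝ) 1, ‖(t : ℂ) * w‖ < 1 := fun t ht => by
    rw [norm_mul, Complex.norm_real, Real.norm_of_nonneg ht.1]
    exact htw t ht
  have key := abs_sub_le_sub_of_abs_deriv_le zero_le_one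
    (fun t ht => hasDerivAt_logJac_comp_of_mem_ball hh hg hlt
      (mem_ball_zero_iff.mpr (norm_mobius_lt_one ha (hmem t ht)))
      (hasDerivAt_mobius_ofReal_mul (one_add_conj_mul_ne_zero ha (hmem t ht))))
    (fun t ht => (hasDerivAt_log_one_add_mul_sub_log_one_sub_mul
      (by rw [abs_of_nonneg (mul_nonneg ht.1 (norm_nonneg w))]; exact htw t ht)).const_mul lam)
    (fun t ht => abs_two_mul_re_PH_mul_deriv_mobius_le hb ha ht.1 (htw t ht))
  simp only [Complex.ofReal_one, Complex.ofReal_zero, one_mul, zero_mul, mobius_zero, hw, add_zero,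
    sub_zero, Real.log_one, sub_self, mul_zero] at key
  rwa [hypDist, pseudoHypDist_eq_norm_mobius, Real.log_div (by positivity) (by linarith)]

theorem mul_norm_PH_le_of_abs_logJac_sub_le {lam : ℝ} (hlam : 0 ≤ lam)
    (hh : DifferentiableOn ℂ h (ball 0 1))
    (hg : DifferentiableOn ℂ g (ball 0 1)) (hlt : ∀ z ∈ ball (0 : ℂ) 1, ‖deriv g z‖ < ‖deriv h z‖)
    (hyp : ∀ z ∈ ball (0 : ℂ) 1, ∀ z₀ ∈ ball (0 : ℂ) 1,
      |logJac h g z - logJac h g z₀| ≤ lam * hypDist z z₀)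
    {a : ℂ} (ha : ‖a‖ < 1) : (1 - ‖a‖ ^ 2) * ‖PH h g a‖ ≤ lam := by
  obtain ⟨v, hv, hPv⟩ := Complex.exists_norm_eq_one_mul_eq_norm (PH h g a)
  set D : ℝ → ℂ := fun t => 1 - conj a * (a + t * v)
  have ha2 : 0 < 1 - ‖a‖ ^ 2 := by nlinarith [norm_nonneg a]
  have hD0 : ‖D 0‖ = 1 - ‖a‖ ^ 2 := by
    simp only [D, Complex.ofReal_zero, zero_mul, add_zero, Complex.conj_mul']
    rw [← Complex.ofReal_pow, ← Complex.ofReal_one, ← Complex.ofReal_sub, Complex.norm_real,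
      Real.norm_of_nonneg ha2.le]
  have hderiv : HasDerivAt (fun t : ℝ => logJac h g (a + t * v)) (2 * ‖PH h g a‖) 0 := by
    simpa [hPv] using hasDerivAt_logJac_comp_of_mem_ball hh hg hlt (c := fun t : ℝ => a + t * v)
      (t := 0) (by simpa using ha) (((hasDerivAt_id _).ofReal_comp.mul_const v).const_add a)
  have hR : ContinuousAt (fun t => 2 * lam / (‖D t‖ - t)) 0 :=
    continuousAt_const.div (by fun_prop) (by simp [hD0, ha2.ne'])
  have hball : ∀ᶠ t : ℝ in 𝓝[>] 0, a + t * v ∈ ball (0 : ℂ) 1 :=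
    nhdsWithin_le_nhds ((by fun_prop : ContinuousAt (fun t : ℝ => a + t * v) 0).eventually
      (isOpen_ball.mem_nhds (by simpa using ha)))
  have hquot : ∀ᶠ t : ℝ in 𝓝[>] 0,
      logJac h g (a + t * v) - logJac h g (a + (0 : ℝ) * v) ≤
        (t - 0) * (2 * lam / (‖D t‖ - t)) := by
    filter_upwards [hball, self_mem_nhdsWithin] with t hmem ht
    calc logJac h g (a + t * v) - logJac h g (a + (0 : ℝ) * v)
        ≤ |logJac h g (a + t * v) - logJac h g a| := by
          simp only [Complex.ofReal_zero, zero_mul, add_zero]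
          exact le_abs_self _
      _ ≤ lam * hypDist (a + t * v) a := hyp _ hmem a (mem_ball_zero_iff.mpr ha)
      _ ≤ lam * (2 * t / (‖D t‖ - t)) :=
          mul_le_mul_of_nonneg_left (hypDist_add_mul_le hv (le_of_lt ht) ha
            (mem_ball_zero_iff.mp hmem)) hlam
      _ = (t - 0) * (2 * lam / (‖D t‖ - t)) := by ring
  have hle := le_of_hasDerivAt_of_sub_le_mul hderiv hR hquot
  rw [hD0, sub_zero, le_div_iff₀ ha2] at hle
  linarith

end Harmonic

theorem nonneg_of_abs_sub_le_mul_hypDist {L : ℂ → ℝ} {lam : ℝ}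
    (hyp : ∀ z ∈ ball (0 : ℂ) 1, ∀ z₀ ∈ ball (0 : ℂ) 1, |L z - L z₀| ≤ lam * hypDist z z₀) :
    0 ≤ lam := by
  have hL := hyp (1 / 2) (by rw [mem_ball_zero_iff]; norm_num) 0 (mem_ball_self one_pos)
  have hd : hypDist (1 / 2) 0 = Real.log 3 := by norm_num [hypDist, pseudoHypDist]
  rw [hd] at hL
  exact nonneg_of_mul_nonneg_left ((abs_nonneg _).trans hL) (Real.log_pos (by norm_num))

theorem stmt14_general (h g : ℂ → ℂ) (hf : SPH h g) (lam : ℝ) :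
    (∀ z ∈ Metric.ball (0 : ℂ) 1, (1 - ‖z‖ ^ 2) * ‖PH h g z‖ ≤ lam) ↔
      ∀ z ∈ Metric.ball (0 : ℂ) 1, ∀ z₀ ∈ Metric.ball (0 : ℂ) 1,
        |Real.log (‖deriv h z‖ ^ 2 - ‖deriv g z‖ ^ 2) -
            Real.log (‖deriv h z₀‖ ^ 2 - ‖deriv g z₀‖ ^ 2)| ≤
          lam * Real.log ((1 + ‖(z - z₀) / (1 - (starRingEnd ℂ) z₀ * z)‖) /
            (1 - ‖(z - z₀) / (1 - (starRingEnd ℂ) z₀ * z)‖)) := by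
  obtain ⟨hh, hg, -, hlt⟩ := hf
  constructor
  · intro hb z hz z₀ hz₀
    exact abs_logJac_sub_le_mul_hypDist hh hg hlt hb (mem_ball_zero_iff.mp hz)
      (mem_ball_zero_iff.mp hz₀)
  · intro hyp z hz
    exact mul_norm_PH_le_of_abs_logJac_sub_le (nonneg_of_abs_sub_le_mul_hypDist hyp) hh hg hlt
      hyp (mem_ball_zero_iff.mp hz)

theorem stmt14 (h g : ℂ → ℂ) (hf : SPH h g) (lam : ℝ)
    (h0 : h 0 = 0) (h1 : deriv h 0 = 1) :
    (∀ z ∈ Metric.ball (0 : ℂ) 1, (1 - ‖z‖ ^ 2) * ‖PH h g z‖ ≤ lam) ↔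
      ∀ z ∈ Metric.ball (0 : ℂ) 1, ∀ z₀ ∈ Metric.ball (0 : ℂ) 1,
        |Real.log (‖deriv h z‖ ^ 2 - ‖deriv g z‖ ^ 2) -
            Real.log (‖deriv h z₀‖ ^ 2 - ‖deriv g z₀‖ ^ 2)| ≤
          lam * Real.log ((1 + ‖(z - z₀) / (1 - (starRingEnd ℂ) z₀ * z)‖) /
            (1 - ‖(z - z₀) / (1 - (starRingEnd ℂ) z₀ * z)‖)) :=
  stmt14_general h g hf lam
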